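/- (Proposition 2.1) Fix n ∈ ℕ. For every polynomial p ∈ ℝ[X], the conjugation by e^{−D²/2} of the operator f p = X²·p' − n·X·p equals (X − D)(𝔻_H − n): explicitly, writing q := X·(E p)' − (E p)'' − n·(E p), one has E(X²·p' − n·X·p) = X·q − q'. -/
import Mathlib


open Polynomial Finset

/-- The operator `e^{−D²/2}` on polynomials: the finite sum
`E p = Σ_{k=0}^{natDegree p} ((−1)^k / (2^k k!)) · p^{(2k)}`. -/
noncomputable def expNegHalfDSq (p : ℝ[X]) : ℝ[X] :=
  ∑ k ∈ range (p.natDegree + 1),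
    ((-1 : ℝ) ^ k / (2 ^ k * (k.factorial : ℝ))) • (⇑derivative)^[2 * k] p

noncomputable def ETrunc (N : ℕ) (p : ℝ[X]) : ℝ[X] :=
  ∑ k ∈ range N,
    ((-1 : ℝ) ^ k / (2 ^ k * (k.factorial : ℝ))) • (⇑derivative)^[2 * k] p

lemma deriv_iter (p : ℝ[X]) (k : ℕ) :
    derivative ((⇑derivative)^[k] p) = (⇑derivative)^[k + 1] p :=
  (Function.iterate_succ_apply' _ _ _).symm

lemma iter_deriv (p : ℝ[X]) (k : ℕ) :
    (⇑derivative)^[k] (derivative p) = (⇑derivative)^[k + 1] p :=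
  (Function.iterate_succ_apply _ _ _).symm

lemma ETrunc_eq (p : ℝ[X]) {N : ℕ} (h : p.natDegree + 1 ≤ N) :
    ETrunc N p = expNegHalfDSq p := by
  unfold ETrunc expNegHalfDSq
  refine (Finset.sum_subset (Finset.range_subset_range.2 h) ?_).symm
  intro k hk hk2
  simp only [Finset.mem_range, not_lt] at hk hk2
  rw [Polynomial.iterate_derivative_eq_zero (by omega), smul_zero]

lemma ETrunc_derivative (N : ℕ) (p : ℝ[X]) :
    ETrunc N (derivative p) = derivative (ETrunc N p) := by
  unfold ETrunc
  rw [derivative_sum]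
  refine Finset.sum_congr rfl fun k _ => ?_
  rw [derivative_smul, deriv_iter, iter_deriv]

lemma ETrunc_sub (N : ℕ) (p r : ℝ[X]) :
    ETrunc N (p - r) = ETrunc N p - ETrunc N r := by
  unfold ETrunc
  rw [← Finset.sum_sub_distrib]
  refine Finset.sum_congr rfl fun k _ => ?_
  rw [Polynomial.iterate_derivative_sub, smul_sub]

lemma ETrunc_C_mul (N : ℕ) (a : ℝ) (p : ℝ[X]) :
    ETrunc N (C a * p) = C a * ETrunc N p := by
  unfold ETrunc
  rw [Finset.mul_sum]
  refine Finset.sum_congr rfl fun k _ => ?_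
  rw [Polynomial.iterate_derivative_C_mul, mul_smul_comm]

lemma iterate_derivative_X_mul (p : ℝ[X]) (k : ℕ) :
    (⇑derivative)^[k] (X * p) =
      X * (⇑derivative)^[k] p + k • (⇑derivative)^[k - 1] p := by
  induction k with
  | zero => simp
  | succ k ih =>
    rw [Function.iterate_succ_apply', ih, derivative_add, derivative_mul, derivative_X,
      one_mul, deriv_iter]
    cases k with
    | zero => simp [add_comm]
    | succ m =>
      rw [derivative_smul, deriv_iter]
      simp only [Nat.succ_sub_one, Nat.add_sub_cancel]
      rw [succ_nsmul ((⇑derivative)^[m + 1] p) (m + 1)]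
      abel

lemma coeff_succ (j : ℕ) :
    ((-1 : ℝ) ^ (j + 1) / (2 ^ (j + 1) * ((j + 1).factorial : ℝ))) * (2 * (j + 1) : ℕ) =
      -((-1 : ℝ) ^ j / (2 ^ j * (j.factorial : ℝ))) := by
  have h1 : (j.factorial : ℝ) ≠ 0 := Nat.cast_ne_zero.2 j.factorial_ne_zero
  have h2 : ((j + 1 : ℕ) : ℝ) ≠ 0 := Nat.cast_ne_zero.2 (Nat.succ_ne_zero j)
  rw [Nat.factorial_succ]
  push_cast
  field_simp
  ring

lemma ETrunc_X_mul (N : ℕ) (p : ℝ[X]) (hN : 1 ≤ N) (h : p.natDegree < 2 * N - 1) :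
    ETrunc N (X * p) = X * ETrunc N p - derivative (ETrunc N p) := by
  obtain ⟨M, rfl⟩ : ∃ M, N = M + 1 := ⟨N - 1, by omega⟩
  have key : ∀ k, ((-1 : ℝ) ^ k / (2 ^ k * (k.factorial : ℝ))) •
      (⇑derivative)^[2 * k] (X * p) =
      X * (((-1 : ℝ) ^ k / (2 ^ k * (k.factorial : ℝ))) • (⇑derivative)^[2 * k] p) +
      ((((-1 : ℝ) ^ k / (2 ^ k * (k.factorial : ℝ))) * (2 * k : ℕ)) •
        (⇑derivative)^[2 * k - 1] p) := by
    intro k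
    rw [iterate_derivative_X_mul, smul_add, mul_smul_comm,
      ← Nat.cast_smul_eq_nsmul ℝ (2 * k), smul_smul]
  unfold ETrunc
  simp only [key]
  rw [Finset.sum_add_distrib, ← Finset.mul_sum]
  have h2 : ∑ k ∈ range (M + 1),
      ((((-1 : ℝ) ^ k / (2 ^ k * (k.factorial : ℝ))) * (2 * k : ℕ)) •
        (⇑derivative)^[2 * k - 1] p) =
      -∑ j ∈ range M, ((-1 : ℝ) ^ j / (2 ^ j * (j.factorial : ℝ))) •
        (⇑derivative)^[2 * j + 1] p := by
    rw [Finset.sum_range_succ']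
    simp only [Nat.mul_zero, Nat.cast_zero, mul_zero, zero_smul, add_zero]
    rw [← Finset.sum_neg_distrib]
    refine Finset.sum_congr rfl fun j _ => ?_
    have hj : 2 * (j + 1) - 1 = 2 * j + 1 := by omega
    rw [hj, coeff_succ, neg_smul]
  rw [h2]
  have h3 : derivative (∑ k ∈ range (M + 1),
      ((-1 : ℝ) ^ k / (2 ^ k * (k.factorial : ℝ))) • (⇑derivative)^[2 * k] p) =
      ∑ j ∈ range M, ((-1 : ℝ) ^ j / (2 ^ j * (j.factorial : ℝ))) •
        (⇑derivative)^[2 * j + 1] p := by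
    rw [derivative_sum, Finset.sum_range_succ]
    simp only [derivative_smul, deriv_iter]
    rw [Polynomial.iterate_derivative_eq_zero (by omega), smul_zero, add_zero]
  rw [h3]
  ring

/-- Proposition 2.1: conjugation by `e^{−D²/2}` of the operator
`f p = X²·p' − n·X·p` equals `(X − D)(𝔻_H − n)`.  Writing
`q = X·(E p)' − (E p)'' − n·(E p)`, one has `E (X²·p' − n·X·p) = X·q − q'`. -/
theorem expNegHalfDSq_conj_f (n : ℕ) (p q : ℝ[X])
    (hq : q = X * derivative (expNegHalfDSq p) -
        derivative (derivative (expNegHalfDSq p)) - C (n : ℝ) * expNegHalfDSq p) :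
    expNegHalfDSq (X ^ 2 * derivative p - C (n : ℝ) * (X * p)) =
      X * q - derivative q := by
  set N := p.natDegree + 4 with hN
  have hdeg1 : (X * derivative p : ℝ[X]).natDegree < 2 * N - 1 := by
    have := Polynomial.natDegree_mul_le (p := (X : ℝ[X])) (q := derivative p)
    have := Polynomial.natDegree_derivative_le p
    have := Polynomial.natDegree_X_le (R := ℝ)
    omega
  have hdegp : p.natDegree < 2 * N - 1 := by omega
  have hargdeg : (X ^ 2 * derivative p - C (n : ℝ) * (X * p)).natDegree + 1 ≤ N := by
    have h1 : (X ^ 2 * derivative p : ℝ[X]).natDegree ≤ p.natDegree + 2 := by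
      refine Polynomial.natDegree_mul_le.trans ?_
      have := Polynomial.natDegree_derivative_le p
      have := Polynomial.natDegree_X_pow_le (R := ℝ) 2
      omega
    have h2 : (C (n : ℝ) * (X * p)).natDegree ≤ p.natDegree + 2 := by
      refine Polynomial.natDegree_mul_le.trans ?_
      have := Polynomial.natDegree_mul_le (p := (X : ℝ[X])) (q := p)
      have := Polynomial.natDegree_X_le (R := ℝ)
      have := (Polynomial.natDegree_C (a := (n : ℝ))).le
      omega
    have := Polynomial.natDegree_sub_le (X ^ 2 * derivative p) (C (n : ℝ) * (X * p))
    omega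
  have hEp : ETrunc N p = expNegHalfDSq p := ETrunc_eq p (by omega)
  set e := expNegHalfDSq p with he
  rw [← ETrunc_eq _ hargdeg, ETrunc_sub, ETrunc_C_mul,
    ETrunc_X_mul N p (by omega) hdegp, hEp]
  have hX2 : (X : ℝ[X]) ^ 2 * derivative p = X * (X * derivative p) := by ring
  rw [hX2, ETrunc_X_mul N (X * derivative p) (by omega) hdeg1]
  have hXd : ETrunc N (X * derivative p) = X * derivative e - derivative (derivative e) := by
    rw [ETrunc_X_mul N (derivative p) (by omega) (by
        have := Polynomial.natDegree_derivative_le p; omega),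
      ETrunc_derivative, hEp]
  rw [hXd, hq]
  simp only [derivative_sub, derivative_mul, derivative_X, derivative_C, one_mul, zero_mul,
    sub_zero]
  ring
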